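/- Let c₁, c₂, c₃ ∈ [−1,1] be such that λ_{mn} = (1/4)·(1 + (−1)^m c₁ − (−1)^{m+n} c₂ + (−1)^n c₃) ≥ 0 for all m,n ∈ {0,1} (i.e. the Bell-diagonal state (1/4)(I₄ + Σᵢ cᵢ σᵢ⊗σᵢ) is a valid density matrix). Then the partial transpose of the nonlocal-cloning output ρ̃ = (1/4)·(I₄ + (3/5)·Σᵢ cᵢ σᵢ⊗σᵢ) fails to be positive semidefinite (equivalently, ρ̃ is entangled) if and only if |c₁| + |c₂| + |c₃| > 5/3. This characterizes the (larger) conic broadcastable regions of Bell-diagonal states under nonlocal cloning. -/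

import Mathlib

open Matrix Kronecker
open scoped ComplexOrder

/-- The three Pauli matrices. -/
noncomputable def pauli : Fin 3 → Matrix (Fin 2) (Fin 2) ℂ :=
  ![!![0, 1; 1, 0], !![0, -Complex.I; Complex.I, 0], !![1, 0; 0, -1]]

/-- Partial transpose on the second qubit:
`(ρ^{T₂})_{(i,μ),(j,ν)} = ρ_{(i,ν),(j,μ)}`. -/
noncomputable def ptranspose (ρ : Matrix (Fin 2 × Fin 2) (Fin 2 × Fin 2) ℂ) :
    Matrix (Fin 2 × Fin 2) (Fin 2 × Fin 2) ℂ :=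
  Matrix.of fun p q => ρ (p.1, q.2) (q.1, p.2)

/-!
Transposing the second factor fixes `σ₁` and `σ₃` and negates `σ₂`, so `ρ̃^{T₂}` is again
Bell-diagonal, with correlations `(3/5)(c₁, -c₂, c₃)`. A Bell-diagonal matrix is positive
semidefinite iff its four eigenvalues `λ_{mn}` are nonnegative, and for `ρ̃^{T₂}` these say
`(3/5) s·c ≤ 1` for the four sign vectors `s` with `s₁s₂s₃ = -1`. For the other four sign
vectors `s·c ≤ 1` already holds because `ρ^b` is a state, so `ρ̃^{T₂} ≥ 0` iff
`(3/5)(|c₁| + |c₂| + |c₃|) ≤ 1`.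
-/

section ptranspose

variable {A B : Matrix (Fin 2 × Fin 2) (Fin 2 × Fin 2) ℂ}

theorem ptranspose_add : ptranspose (A + B) = ptranspose A + ptranspose B := rfl

theorem ptranspose_smul (z : ℂ) : ptranspose (z • A) = z • ptranspose A := rfl

theorem ptranspose_one : ptranspose 1 = 1 := by
  ext ⟨i, μ⟩ ⟨j, ν⟩
  simp only [ptranspose, of_apply, one_apply, Prod.mk.injEq]
  congr 1
  grind

theorem ptranspose_kronecker (X Y : Matrix (Fin 2) (Fin 2) ℂ) :
    ptranspose (X ⊗ₖ Y) = X ⊗ₖ Yᵀ := rfl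

end ptranspose

theorem kronecker_neg {l m n p R : Type*} [Ring R] (X : Matrix l m R) (Y : Matrix n p R) :
    X ⊗ₖ (-Y) = -(X ⊗ₖ Y) := by
  ext; simp

theorem pauli_isHermitian (i : Fin 3) : (pauli i).IsHermitian := by
  fin_cases i <;> ext a b <;> fin_cases a <;> fin_cases b <;> simp [pauli]

theorem pauli_transpose_zero : (pauli 0)ᵀ = pauli 0 := by
  ext a b; fin_cases a <;> fin_cases b <;> simp [pauli]

theorem pauli_transpose_one : (pauli 1)ᵀ = -pauli 1 := by
  ext a b; fin_cases a <;> fin_cases b <;> simp [pauli]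

theorem pauli_transpose_two : (pauli 2)ᵀ = pauli 2 := by
  ext a b; fin_cases a <;> fin_cases b <;> simp [pauli]

noncomputable def bellDiagonal (a₁ a₂ a₃ : ℝ) : Matrix (Fin 2 × Fin 2) (Fin 2 × Fin 2) ℂ :=
  (1/4 : ℂ) • (1 + ((a₁ : ℂ) • (pauli 0 ⊗ₖ pauli 0) + (a₂ : ℂ) • (pauli 1 ⊗ₖ pauli 1)
    + (a₃ : ℂ) • (pauli 2 ⊗ₖ pauli 2)))

noncomputable def bellEigenvalue (a₁ a₂ a₃ : ℝ) (m n : Fin 2) : ℝ :=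
  (1/4 : ℝ) * (1 + (-1)^(m : ℕ) * a₁ - (-1)^((m : ℕ) + (n : ℕ)) * a₂ + (-1)^(n : ℕ) * a₃)

theorem ptranspose_bellDiagonal (a₁ a₂ a₃ : ℝ) :
    ptranspose (bellDiagonal a₁ a₂ a₃) = bellDiagonal a₁ (-a₂) a₃ := by
  simp only [bellDiagonal, ptranspose_smul, ptranspose_add, ptranspose_one,
    ptranspose_kronecker, pauli_transpose_zero, pauli_transpose_one, pauli_transpose_two,
    kronecker_neg, Complex.ofReal_neg, neg_smul, smul_neg]

theorem bellDiagonal_isHermitian (a₁ a₂ a₃ : ℝ) : (bellDiagonal a₁ a₂ a₃).IsHermitian := by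
  have hσ (a : ℝ) (i : Fin 3) : ((a : ℂ) • (pauli i ⊗ₖ pauli i)).IsHermitian := by
    refine IsHermitian.smul ?_ (Complex.conj_ofReal a)
    rw [IsHermitian, conjTranspose_kronecker, (pauli_isHermitian i).eq]
  refine (isHermitian_one.add (((hσ a₁ 0).add (hσ a₂ 1)).add (hσ a₃ 2))).smul ?_
  simp [IsSelfAdjoint]

/-- `x₀₀ ± x₁₁` and `x₀₁ ± x₁₀` are the coordinates of `x` in the (unnormalised) Bell basis. -/
theorem dotProduct_bellDiagonal_mulVec (a₁ a₂ a₃ : ℝ) (x : Fin 2 × Fin 2 → ℂ) :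
    star x ⬝ᵥ (bellDiagonal a₁ a₂ a₃ *ᵥ x) =
      ((1/2 * (bellEigenvalue a₁ a₂ a₃ 0 0 * Complex.normSq (x (0,0) + x (1,1))
        + bellEigenvalue a₁ a₂ a₃ 1 0 * Complex.normSq (x (0,0) - x (1,1))
        + bellEigenvalue a₁ a₂ a₃ 0 1 * Complex.normSq (x (0,1) + x (1,0))
        + bellEigenvalue a₁ a₂ a₃ 1 1 * Complex.normSq (x (0,1) - x (1,0))) : ℝ) : ℂ) := by
  simp only [dotProduct, mulVec, Fintype.sum_prod_type, Fin.sum_univ_two, bellDiagonal, pauli,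
    bellEigenvalue, Complex.normSq_apply]
  simp only [Fin.isValue, Pi.star_apply, RCLike.star_def, one_div, cons_val_zero,
    Complex.coe_smul, cons_val_one, cons_val, Matrix.smul_apply, Matrix.add_apply, one_apply,
    ↓reduceIte, kroneckerMap_apply, of_apply, cons_val', cons_val_fin_one, mul_zero, smul_zero,
    add_zero, mul_one, Complex.real_smul, zero_add, smul_eq_mul, Prod.mk.injEq, zero_ne_one,
    and_false, mul_neg, zero_mul, neg_zero, and_true, and_self, neg_mul, Complex.I_mul_I, neg_neg,
    smul_neg, one_ne_zero, Fin.coe_ofNat_eq_mod, Nat.zero_mod, pow_zero, one_mul, Complex.add_re,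
    Complex.add_im, Nat.mod_succ, pow_one, sub_neg_eq_add, Complex.sub_re, Complex.sub_im,
    Nat.reduceAdd, even_two, Even.neg_pow, one_pow, Complex.ofReal_mul, Complex.ofReal_inv,
    Complex.ofReal_ofNat, Complex.ofReal_add, Complex.ofReal_sub, Complex.ofReal_one,
    Complex.ofReal_neg, Complex.ext_iff, Complex.mul_re, Complex.conj_re, Complex.inv_re,
    Complex.re_ofNat, Complex.normSq_ofNat, div_self_mul_self', Complex.one_re, Complex.ofReal_re,
    Complex.inv_im, Complex.im_ofNat, zero_div, Complex.one_im, Complex.ofReal_im, sub_zero,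
    Complex.mul_im, Complex.neg_re, Complex.neg_im, Complex.conj_im, sub_self]
  constructor <;> ring

theorem posSemidef_bellDiagonal_iff (a₁ a₂ a₃ : ℝ) :
    (bellDiagonal a₁ a₂ a₃).PosSemidef ↔ ∀ m n, 0 ≤ bellEigenvalue a₁ a₂ a₃ m n := by
  simp only [posSemidef_iff_dotProduct_mulVec, bellDiagonal_isHermitian, true_and,
    dotProduct_bellDiagonal_mulVec, Complex.zero_le_real]
  constructor
  · intro h
    have h₁ := h fun p => !![1, 0; 0, 1] p.1 p.2
    have h₂ := h fun p => !![1, 0; 0, -1] p.1 p.2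
    have h₃ := h fun p => !![0, 1; 1, 0] p.1 p.2
    have h₄ := h fun p => !![0, 1; -1, 0] p.1 p.2
    norm_num at h₁ h₂ h₃ h₄
    simp only [Fin.forall_fin_two]
    exact ⟨⟨h₁, h₃⟩, h₂, h₄⟩
  · intro h x
    have hterm (m n : Fin 2) (z : ℂ) : 0 ≤ bellEigenvalue a₁ a₂ a₃ m n * Complex.normSq z :=
      mul_nonneg (h m n) (Complex.normSq_nonneg z)
    exact mul_nonneg (by norm_num) <|
      add_nonneg (add_nonneg (add_nonneg (hterm _ _ _) (hterm _ _ _)) (hterm _ _ _)) (hterm _ _ _)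

theorem posSemidef_ptranspose_bellDiagonal_mul_iff {c₁ c₂ c₃ η : ℝ}
    (hc : ∀ m n, 0 ≤ bellEigenvalue c₁ c₂ c₃ m n) (hη₀ : 0 ≤ η) (hη₁ : η ≤ 1) :
    (ptranspose (bellDiagonal (η * c₁) (η * c₂) (η * c₃))).PosSemidef ↔
      η * (|c₁| + |c₂| + |c₃|) ≤ 1 := by
  rw [ptranspose_bellDiagonal, posSemidef_bellDiagonal_iff]
  simp only [Fin.forall_fin_two, bellEigenvalue] at hc ⊢
  norm_num at hc ⊢
  obtain ⟨⟨h₁, h₂⟩, h₃, h₄⟩ := hc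
  constructor
  · rintro ⟨⟨g₁, g₂⟩, g₃, g₄⟩
    have := mul_nonneg hη₀ h₁
    have := mul_nonneg hη₀ (sub_nonneg.2 h₂)
    have := mul_nonneg hη₀ h₃
    have := mul_nonneg hη₀ (sub_nonneg.2 h₄)
    rcases abs_cases c₁ with ⟨e₁, -⟩ | ⟨e₁, -⟩ <;> rcases abs_cases c₂ with ⟨e₂, -⟩ | ⟨e₂, -⟩ <;>
      rcases abs_cases c₃ with ⟨e₃, -⟩ | ⟨e₃, -⟩ <;> rw [e₁, e₂, e₃] <;> linarith
  · intro h
    have hbound (c : ℝ) : η * c ≤ η * |c| ∧ -(η * c) ≤ η * |c| :=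
      ⟨mul_le_mul_of_nonneg_left (le_abs_self c) hη₀,
        by rw [← mul_neg]; exact mul_le_mul_of_nonneg_left (neg_le_abs c) hη₀⟩
    obtain ⟨b₁, b₁'⟩ := hbound c₁
    obtain ⟨b₂, b₂'⟩ := hbound c₂
    obtain ⟨b₃, b₃'⟩ := hbound c₃
    refine ⟨⟨?_, ?_⟩, ?_, ?_⟩ <;> linarith

theorem belldiagonal_broadcasting_range_nonlocal_general (c₁ c₂ c₃ : ℝ)
    (hEig : ∀ m n : Fin 2, 0 ≤ (1/4 : ℝ) * (1 + (-1)^(m : ℕ) * c₁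
        - (-1)^((m : ℕ) + (n : ℕ)) * c₂ + (-1)^(n : ℕ) * c₃)) :
    ¬ (ptranspose ((1/4 : ℂ) • ((1 : Matrix (Fin 2 × Fin 2) (Fin 2 × Fin 2) ℂ)
        + (3/5 : ℂ) • ((c₁ : ℂ) • (pauli 0 ⊗ₖ pauli 0) + (c₂ : ℂ) • (pauli 1 ⊗ₖ pauli 1)
            + (c₃ : ℂ) • (pauli 2 ⊗ₖ pauli 2))))).PosSemidef
    ↔ 5/3 < |c₁| + |c₂| + |c₃| := by
  have hclone : (1/4 : ℂ) • ((1 : Matrix (Fin 2 × Fin 2) (Fin 2 × Fin 2) ℂ)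
      + (3/5 : ℂ) • ((c₁ : ℂ) • (pauli 0 ⊗ₖ pauli 0) + (c₂ : ℂ) • (pauli 1 ⊗ₖ pauli 1)
        + (c₃ : ℂ) • (pauli 2 ⊗ₖ pauli 2))) = bellDiagonal (3/5 * c₁) (3/5 * c₂) (3/5 * c₃) := by
    simp only [bellDiagonal, smul_add, smul_smul]
    push_cast
    rfl
  rw [hclone, posSemidef_ptranspose_bellDiagonal_mul_iff hEig (by norm_num) (by norm_num), not_le]
  constructor <;> intro h <;> linarith

/-- Broadcastable region of Bell-diagonal states under nonlocal cloning.  If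
the Bell-diagonal state with parameters `c₁, c₂, c₃ ∈ [−1,1]` is a valid density matrix
(all eigenvalues `λ_{mn} ≥ 0`), then the clone output `ρ̃₁₂ = {0, 0, (3/5)T^b}` of the
Buzek–Hillery nonlocal optimal cloner has non-positive-semidefinite partial transpose
(i.e. is entangled) iff `|c₁| + |c₂| + |c₃| > 5/3`. -/
theorem belldiagonal_broadcasting_range_nonlocal (c₁ c₂ c₃ : ℝ)
    (hc1 : c₁ ∈ Set.Icc (-1 : ℝ) 1) (hc2 : c₂ ∈ Set.Icc (-1 : ℝ) 1)
    (hc3 : c₃ ∈ Set.Icc (-1 : ℝ) 1)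
    (hEig : ∀ m n : Fin 2, 0 ≤ (1/4 : ℝ) * (1 + (-1)^(m : ℕ) * c₁
        - (-1)^((m : ℕ) + (n : ℕ)) * c₂ + (-1)^(n : ℕ) * c₃)) :
    ¬ (ptranspose ((1/4 : ℂ) • ((1 : Matrix (Fin 2 × Fin 2) (Fin 2 × Fin 2) ℂ)
        + (3/5 : ℂ) • ((c₁ : ℂ) • (pauli 0 ⊗ₖ pauli 0) + (c₂ : ℂ) • (pauli 1 ⊗ₖ pauli 1)
            + (c₃ : ℂ) • (pauli 2 ⊗ₖ pauli 2))))).PosSemidef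
    ↔ 5/3 < |c₁| + |c₂| + |c₃| :=
  belldiagonal_broadcasting_range_nonlocal_general c₁ c₂ c₃ hEig
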